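/- For all homogeneous F, G ∈ C^∞(ℝ^{1|2}), the supercommutator of the contact vector fields, X_F∘X_G − (−1)^{|F||G|} X_G∘X_F (as operators on C^∞(ℝ^{1|2})), equals X_{{F,G}}, where {F,G} = FG' − F'G − (1/2)(−1)^{|F|}(η̄_1(F)η̄_1(G) + η̄_2(F)η̄_2(G)). -/

import Mathlib

noncomputable section
open Function
open scoped ContDiff

def SmoothFn : Subalgebra ℝ (ℝ → ℝ) where
  carrier := {f | ContDiff ℝ ∞ f}
  mul_mem' := fun {a b} (hf : ContDiff ℝ ∞ a) (hg : ContDiff ℝ ∞ b) => hf.mul hg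
  add_mem' := fun {a b} (hf : ContDiff ℝ ∞ a) (hg : ContDiff ℝ ∞ b) => hf.add hg
  algebraMap_mem' := fun c => (contDiff_const : ContDiff ℝ ∞ (fun _ : ℝ => c))

abbrev SF : Type := SmoothFn

theorem mem_SmoothFn {f : ℝ → ℝ} : f ∈ SmoothFn ↔ ContDiff ℝ ∞ f := ⟨fun h => h, fun h => h⟩

def sderiv (f : SF) : SF :=
  ⟨deriv (f : ℝ → ℝ), mem_SmoothFn.mpr (contDiff_infty_iff_deriv.mp (mem_SmoothFn.mp f.2)).2⟩

def cx : SF := ⟨id, mem_SmoothFn.mpr contDiff_id⟩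

/-- `C^∞(ℝ^{1|2})`: a superfunction `f₀ + f₁θ₁ + f₂θ₂ + f₁₂θ₁θ₂` is recorded by its four
smooth coefficients, indexed by `0 ↦ f₀`, `1 ↦ f₁`, `2 ↦ f₂`, `3 ↦ f₁₂`. -/
def S2 : Type := Fin 4 → SF

instance : AddCommGroup S2 := inferInstanceAs (AddCommGroup (Fin 4 → SF))
instance : Module ℝ S2 := inferInstanceAs (Module ℝ (Fin 4 → SF))

namespace S2

@[simp] theorem add_apply (F G : S2) (i : Fin 4) : (F + G) i = F i + G i := rfl
@[simp] theorem sub_apply (F G : S2) (i : Fin 4) : (F - G) i = F i - G i := rfl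
@[simp] theorem smul_apply (c : ℝ) (F : S2) (i : Fin 4) : (c • F) i = c • F i := rfl
@[simp] theorem zero_apply (i : Fin 4) : (0 : S2) i = 0 := rfl

/-- Supercommutative multiplication on `C^∞(ℝ^{1|2})`. -/
def mul (F G : S2) : S2 :=
  ![F 0 * G 0,
    F 0 * G 1 + F 1 * G 0,
    F 0 * G 2 + F 2 * G 0,
    F 0 * G 3 + F 3 * G 0 + F 1 * G 2 - F 2 * G 1]

/-- The odd coordinate `θ₁`. -/
def θ1 : S2 := ![0, 1, 0, 0]
/-- The odd coordinate `θ₂`. -/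
def θ2 : S2 := ![0, 0, 1, 0]
/-- The constant superfunction `1`. -/
def one2 : S2 := ![1, 0, 0, 0]
/-- The superfunction `x`. -/
def fx : S2 := ![cx, 0, 0, 0]
/-- The superfunction `x²`. -/
def fx2 : S2 := ![cx * cx, 0, 0, 0]
/-- The superfunction `xθ₁`. -/
def fxθ1 : S2 := ![0, cx, 0, 0]
/-- The superfunction `xθ₂`. -/
def fxθ2 : S2 := ![0, 0, cx, 0]
/-- The superfunction `θ₁θ₂`. -/
def fθ12 : S2 := ![0, 0, 0, 1]

/-- The even derivative `∂ₓ`. -/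
def dx (F : S2) : S2 := fun i => sderiv (F i)
/-- The odd (left) partial derivative `∂₁ = ∂/∂θ₁`. -/
def d1 (F : S2) : S2 := ![F 1, 0, F 3, 0]
/-- The odd (left) partial derivative `∂₂ = ∂/∂θ₂`. -/
def d2 (F : S2) : S2 := ![F 2, -F 3, 0, 0]
/-- The odd vector field `η̄₁ = ∂₁ − θ₁∂ₓ`. -/
def eta1 (F : S2) : S2 := d1 F - mul θ1 (dx F)
/-- The odd vector field `η̄₂ = ∂₂ − θ₂∂ₓ`. -/
def eta2 (F : S2) : S2 := d2 F - mul θ2 (dx F)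

/-- The even part `f₀ + f₁₂θ₁θ₂` of a superfunction. -/
def evenPart (F : S2) : S2 := ![F 0, 0, 0, F 3]
/-- The odd part `f₁θ₁ + f₂θ₂` of a superfunction. -/
def oddPart (F : S2) : S2 := ![0, F 1, F 2, 0]

/-- `F` is even (parity `0̄`). -/
def IsEven (F : S2) : Prop := F 1 = 0 ∧ F 2 = 0
/-- `F` is odd (parity `1̄`). -/
def IsOdd (F : S2) : Prop := F 0 = 0 ∧ F 3 = 0
/-- `F` is homogeneous of parity `p` (`false` = even, `true` = odd). -/
def HasParity (F : S2) (p : Bool) : Prop := if p then IsOdd F else IsEven F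

/-- The sign `(−1)^p`. -/
def sgn (p : Bool) : ℝ := if p then -1 else 1

/-- The contact vector field `X_F` applied to `G`; for homogeneous `F` this is
`F∂ₓ(G) − ½(−1)^{|F|}(η̄₁(F)η̄₁(G) + η̄₂(F)η̄₂(G))`, extended linearly in `F`. -/
def X (F G : S2) : S2 :=
  mul F (dx G)
    - (1 / 2 : ℝ) • (mul (eta1 (evenPart F)) (eta1 G) + mul (eta2 (evenPart F)) (eta2 G))
    + (1 / 2 : ℝ) • (mul (eta1 (oddPart F)) (eta1 G) + mul (eta2 (oddPart F)) (eta2 G))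

/-- The contact bracket `{F,G} = FG' − F'G − ½(−1)^{|F|}(η̄₁(F)η̄₁(G) + η̄₂(F)η̄₂(G))`
(for homogeneous `F`, extended linearly), so `[X_F, X_G] = X_{{F,G}}`. -/
def cbr (F G : S2) : S2 := X F G - mul (dx F) G

/-- The action `L^λ_{X_H}(G) = X_H(G) + λ H' G` of `X_H` on `λ`-densities `F²_λ`. -/
def Lact (lam : ℝ) (H G : S2) : S2 := X H G + lam • mul (dx H) G

/-- `osp(2|2)`, realized as the span of the contact Hamiltonians
`1, x, x², xθ₁, xθ₂, θ₁, θ₂, θ₁θ₂` (identifying `X_F ↔ F`). -/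
def osp22 : Submodule ℝ S2 :=
  Submodule.span ℝ {one2, fx, fx2, fxθ1, fxθ2, θ1, θ2, fθ12}

/-- `osp(1|2) ⊂ osp(2|2)`: the span of `1, x, x², xθ₁, θ₁`. -/
def osp12 : Submodule ℝ S2 :=
  Submodule.span ℝ {one2, fx, fx2, fxθ1, θ1}

/-- A linear differential operator `F²_λ → F²_μ`:
`A(F) = Σ_{ℓ,m} a_{ℓ,m} η̄₁^ℓ η̄₂^m (F)` with smooth coefficients. -/
def IsDiffOp (A : S2 → S2) : Prop :=
  ∃ (N : ℕ) (a : Fin (N + 1) → Fin (N + 1) → S2),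
    ∀ F, A F = ∑ l : Fin (N + 1), ∑ m : Fin (N + 1),
      mul (a l m) (eta1^[(l : ℕ)] (eta2^[(m : ℕ)] F))

/-- The action of `X_H` (`H` homogeneous of parity `pH`) on a homogeneous operator `A`
of parity `pA`: `X_H·A = L^μ_{X_H} ∘ A − (−1)^{|H||A|} A ∘ L^λ_{X_H}`. -/
def opAct (lam mu : ℝ) (pH pA : Bool) (H : S2) (A : S2 → S2) : S2 → S2 :=
  fun F => Lact mu H (A F) - sgn (pH && pA) • A (Lact lam H F)

/-- An operator is homogeneous of parity `p` if it shifts the parity of homogeneous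
superfunctions by `p`. -/
def OpParity (A : S2 → S2) (p : Bool) : Prop :=
  ∀ (F : S2) (q : Bool), HasParity F q → HasParity (A F) (xor p q)


/-- A `1`-cochain of `osp(2|2)` with values in `D²_{λ,μ}`, recorded as a map defined on all
contact Hamiltonians; it represents a cochain through its restriction to `osp22`,
`Υ(X_G) = U G`. -/
abbrev Cochain := S2 → (S2 → S2)

/-- A cochain takes values in differential operators (on `osp(2|2)`). -/
def DiffValued (U : Cochain) : Prop := ∀ F ∈ osp22, IsDiffOp (U F)

/-- The `1`-cocycle condition for a homogeneous cochain `U` of parity `pU`: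
`Υ([X_F,X_G]) = (−1)^{|F||Υ|} X_F·Υ(X_G) − (−1)^{|G|(|F|+|Υ|)} X_G·Υ(X_F)`
for all homogeneous `X_F, X_G ∈ osp(2|2)`. -/
def IsCocycle (lam mu : ℝ) (pU : Bool) (U : Cochain) : Prop :=
  ∀ F G : S2, F ∈ osp22 → G ∈ osp22 →
    ∀ pF pG : Bool, HasParity F pF → HasParity G pG →
      U (cbr F G) =
        sgn (pF && pU) • opAct lam mu pF (xor pU pG) F (U G)
          - sgn (pG && xor pF pU) • opAct lam mu pG (xor pU pF) G (U F)

/-- `U` is a coboundary of parity `pU`: there is `A ∈ D²_{λ,μ}` of parity `pU` with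
`Υ(X_F) = (−1)^{|F||A|} X_F·A` for all `X_F ∈ osp(2|2)`. -/
def IsCoboundary (lam mu : ℝ) (pU : Bool) (U : Cochain) : Prop :=
  ∃ A : S2 → S2, IsDiffOp A ∧ OpParity A pU ∧
    ∀ F ∈ osp22, ∀ pF : Bool, HasParity F pF →
      U F = sgn (pF && pU) • opAct lam mu pF pU F A

/-- `U` is a coboundary (of some homogeneous `A ∈ D²_{λ,μ}`). -/
def IsCoboundaryAny (lam mu : ℝ) (U : Cochain) : Prop :=
  ∃ pU : Bool, IsCoboundary lam mu pU U

/-- An `osp(1|2)`-relative `1`-cocycle: a `1`-cocycle vanishing on `osp(1|2)`. -/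
def IsRelCocycle (lam mu : ℝ) (pU : Bool) (U : Cochain) : Prop :=
  IsCocycle lam mu pU U ∧ ∀ F ∈ osp12, U F = 0

/-- `A ∈ D²_{λ,μ}` (of parity `pA`) is `osp(1|2)`-invariant: `X_H·A = 0` for all
`X_H ∈ osp(1|2)`. -/
def IsInvariantOp (lam mu : ℝ) (pA : Bool) (A : S2 → S2) : Prop :=
  ∀ H ∈ osp12, ∀ pH : Bool, HasParity H pH → opAct lam mu pH pA H A = 0

/-- `U` is an `osp(1|2)`-relative coboundary of parity `pU`: `Υ = δA` with `A` an
`osp(1|2)`-invariant homogeneous element of `D²_{λ,μ}`. -/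
def IsRelCoboundary (lam mu : ℝ) (pU : Bool) (U : Cochain) : Prop :=
  ∃ A : S2 → S2, IsDiffOp A ∧ OpParity A pU ∧ IsInvariantOp lam mu pU A ∧
    ∀ F ∈ osp22, ∀ pF : Bool, HasParity F pF →
      U F = sgn (pF && pU) • opAct lam mu pF pU F A

/-- `U` is a relative coboundary (of some homogeneous invariant `A`). -/
def IsRelCoboundaryAny (lam mu : ℝ) (U : Cochain) : Prop :=
  ∃ pU : Bool, IsRelCoboundary lam mu pU U

/-! ### The explicit nontrivial cocycles -/

/-- `Υ_{λ,λ}(X_G) : F ↦ G′·F`. -/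
def U1 : Cochain := fun G F => mul (dx G) F

/-- `Υ̃_{0,0}(X_G) : F ↦ η̄₁η̄₂(G)·F`. -/
def Ut0 : Cochain := fun G F => mul (eta1 (eta2 G)) F

/-- `Υ̃_{λ,λ}(X_G) : F ↦ 2λ η̄₁(∂₂G)·F − (−1)^{|G|}(∂₂(G)·η̄₁(F) + θ₂·η̄₂η̄₁(G)·η̄₂(F))`
(for `λ ≠ 0`), the sign `(−1)^{|G|}` being realized by the even/odd splitting of `G`. -/
def Ut (lam : ℝ) : Cochain := fun G F =>
  (2 * lam) • mul (eta1 (d2 G)) F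
    - (mul (d2 (evenPart G)) (eta1 F) + mul (mul θ2 (eta2 (eta1 (evenPart G)))) (eta2 F))
    + (mul (d2 (oddPart G)) (eta1 F) + mul (mul θ2 (eta2 (eta1 (oddPart G)))) (eta2 F))

/-- `Υ̃_{λ,λ}` for general `λ` (with the special value at `λ = 0`). -/
def Ut' (lam : ℝ) : Cochain := if lam = 0 then Ut0 else Ut lam

/-- `Υ_{−k/2,k/2}(X_G) : F ↦ G′·η̄₁η̄₂^{2k−1}(F)`. -/
def Uk (k : ℕ) : Cochain := fun G F => mul (dx G) (eta1 (eta2^[2 * k - 1] F))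

/-- `Υ̃_{−k/2,k/2}(X_G) :
F ↦ k η̄₁(∂₂G)·η̄₁η̄₂^{2k−1}(F) − (−1)^{|G|}(∂₂(G)·η̄₂^{2k+1}(F) − η̄₁(θ₂∂₂(G))·η̄₁^{2k+1}(F))`. -/
def Utk (k : ℕ) : Cochain := fun G F =>
  (k : ℝ) • mul (eta1 (d2 G)) (eta1 (eta2^[2 * k - 1] F))
    - (mul (d2 (evenPart G)) (eta2^[2 * k + 1] F)
        - mul (eta1 (mul θ2 (d2 (evenPart G)))) (eta1^[2 * k + 1] F))
    + (mul (d2 (oddPart G)) (eta2^[2 * k + 1] F)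
        - mul (eta1 (mul θ2 (d2 (oddPart G)))) (eta1^[2 * k + 1] F))

/-- `Ῡ_{−k/2,k/2}(X_G) :
F ↦ (k−1) G″·η̄₁η̄₂^{2k−3}(F) + (−1)^{|G|}(η̄₂(G′)·η̄₁^{2k−1}(F) − η̄₁(G′)·η̄₂^{2k−1}(F))`. -/
def Ub (k : ℕ) : Cochain := fun G F =>
  ((k : ℝ) - 1) • mul (dx (dx G)) (eta1 (eta2^[2 * k - 3] F))
    + (mul (eta2 (dx (evenPart G))) (eta1^[2 * k - 1] F)
        - mul (eta1 (dx (evenPart G))) (eta2^[2 * k - 1] F))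
    - (mul (eta2 (dx (oddPart G))) (eta1^[2 * k - 1] F)
        - mul (eta1 (dx (oddPart G))) (eta2^[2 * k - 1] F))

/-! ### The action on possibly inhomogeneous operators -/

/-- The even part of an operator. -/
def opEven (A : S2 → S2) : S2 → S2 :=
  fun F => evenPart (A (evenPart F)) + oddPart (A (oddPart F))

/-- The odd part of an operator. -/
def opOdd (A : S2 → S2) : S2 → S2 :=
  fun F => oddPart (A (evenPart F)) + evenPart (A (oddPart F))

/-- The action `X_H·A` of a homogeneous `X_H` on a possibly inhomogeneous operator `A`,
extending `opAct` by linearity in `A` via its parity decomposition. -/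
def opActG (lam mu : ℝ) (pH : Bool) (H : S2) (A : S2 → S2) : S2 → S2 :=
  fun F => Lact mu H (A F)
    - (opEven A (Lact lam H F) + sgn pH • opOdd A (Lact lam H F))

/-- The coboundary `δA` of a homogeneous operator `A` of parity `pA`, as a cochain:
`δA(X_F) = (−1)^{|F||A|} X_F·A`, extended linearly in `F`. -/
def cobdMap (lam mu : ℝ) (pA : Bool) (A : S2 → S2) : Cochain := fun F =>
  opAct lam mu false pA (evenPart F) A
    + sgn pA • opAct lam mu true pA (oddPart F) A

/-- A differential operator with constant coefficients. -/
def IsConstCoeffOp (A : S2 → S2) : Prop :=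
  ∃ (N : ℕ) (a : Fin (N + 1) → Fin (N + 1) → Fin 4 → ℝ),
    ∀ F, A F = ∑ l : Fin (N + 1), ∑ m : Fin (N + 1),
      mul (fun i => algebraMap ℝ SF (a l m i)) (eta1^[(l : ℕ)] (eta2^[(m : ℕ)] F))

end S2

/-!
In coefficients, `X F` is an explicit first-order differential operator on the four component
functions of its argument, with coefficients linear in those of `F` and `F'`. Substituting these
formulas and expanding derivatives of products by the Leibniz rule, both sides become the same
differential polynomial in the components of `F`, `G` and the argument. Homogeneity enters by
killing the components of the wrong parity, which is what makes the sign `(−1)^{|F||G|}` right.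
-/

theorem SmoothFn.differentiable (f : SF) : Differentiable ℝ (f : ℝ → ℝ) :=
  (mem_SmoothFn.mp f.2).differentiable (by simp)

theorem sderiv_add (f g : SF) : sderiv (f + g) = sderiv f + sderiv g :=
  Subtype.ext <| funext fun x =>
    deriv_add (SmoothFn.differentiable f x) (SmoothFn.differentiable g x)

theorem sderiv_smul (c : ℝ) (f : SF) : sderiv (c • f) = c • sderiv f :=
  Subtype.ext <| funext fun x => deriv_const_smul c (SmoothFn.differentiable f x)

theorem sderiv_mul (f g : SF) : sderiv (f * g) = sderiv f * g + f * sderiv g :=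
  Subtype.ext <| funext fun x =>
    deriv_mul (SmoothFn.differentiable f x) (SmoothFn.differentiable g x)

def sderivLinearMap : SF →ₗ[ℝ] SF where
  toFun := sderiv
  map_add' := sderiv_add
  map_smul' := sderiv_smul

theorem sderiv_sub (f g : SF) : sderiv (f - g) = sderiv f - sderiv g := map_sub sderivLinearMap f g

theorem sderiv_neg (f : SF) : sderiv (-f) = -sderiv f := map_neg sderivLinearMap f

theorem sderiv_zero : sderiv 0 = 0 := map_zero sderivLinearMap

namespace S2

theorem sgn_true : sgn true = -1 := rfl

theorem sgn_false : sgn false = 1 := rfl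

theorem ext {F G : S2} (h₀ : F 0 = G 0) (h₁ : F 1 = G 1) (h₂ : F 2 = G 2) (h₃ : F 3 = G 3) :
    F = G := by
  funext i
  fin_cases i <;> assumption

variable (F G : S2)

@[simp] theorem dx_apply (i : Fin 4) : dx F i = sderiv (F i) := rfl

@[simp] theorem mul_apply_zero : mul F G 0 = F 0 * G 0 := rfl
@[simp] theorem mul_apply_one : mul F G 1 = F 0 * G 1 + F 1 * G 0 := rfl
@[simp] theorem mul_apply_two : mul F G 2 = F 0 * G 2 + F 2 * G 0 := rfl
@[simp] theorem mul_apply_three : mul F G 3 = F 0 * G 3 + F 3 * G 0 + F 1 * G 2 - F 2 * G 1 :=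
  rfl

@[simp] theorem evenPart_apply_zero : evenPart F 0 = F 0 := rfl
@[simp] theorem evenPart_apply_one : evenPart F 1 = 0 := rfl
@[simp] theorem evenPart_apply_two : evenPart F 2 = 0 := rfl
@[simp] theorem evenPart_apply_three : evenPart F 3 = F 3 := rfl

@[simp] theorem oddPart_apply_zero : oddPart F 0 = 0 := rfl
@[simp] theorem oddPart_apply_one : oddPart F 1 = F 1 := rfl
@[simp] theorem oddPart_apply_two : oddPart F 2 = F 2 := rfl
@[simp] theorem oddPart_apply_three : oddPart F 3 = 0 := rfl

@[simp] theorem eta1_apply_zero : eta1 F 0 = F 1 := by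
  rw [eta1, sub_apply, mul_apply_zero]; simp [d1, θ1]
@[simp] theorem eta1_apply_one : eta1 F 1 = -sderiv (F 0) := by
  rw [eta1, sub_apply, mul_apply_one]; simp [d1, θ1]
@[simp] theorem eta1_apply_two : eta1 F 2 = F 3 := by
  rw [eta1, sub_apply, mul_apply_two]; simp [d1, θ1]
@[simp] theorem eta1_apply_three : eta1 F 3 = -sderiv (F 2) := by
  rw [eta1, sub_apply, mul_apply_three]; simp [d1, θ1]

@[simp] theorem eta2_apply_zero : eta2 F 0 = F 2 := by
  rw [eta2, sub_apply, mul_apply_zero]; simp [d2, θ2]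
@[simp] theorem eta2_apply_one : eta2 F 1 = -F 3 := by
  rw [eta2, sub_apply, mul_apply_one]; simp [d2, θ2]
@[simp] theorem eta2_apply_two : eta2 F 2 = -sderiv (F 0) := by
  rw [eta2, sub_apply, mul_apply_two]; simp [d2, θ2]
@[simp] theorem eta2_apply_three : eta2 F 3 = sderiv (F 1) := by
  rw [eta2, sub_apply, mul_apply_three]; simp [d2, θ2]

theorem X_apply_zero :
    X F G 0 = F 0 * sderiv (G 0) + (1 / 2 : ℝ) • (F 1 * G 1 + F 2 * G 2) := by
  simp only [X, add_apply, sub_apply, smul_apply, dx_apply, mul_apply_zero, eta1_apply_zero,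
    eta2_apply_zero, evenPart_apply_one, evenPart_apply_two, oddPart_apply_one, oddPart_apply_two]
  algebra

theorem X_apply_one :
    X F G 1 = F 0 * sderiv (G 1)
      + (1 / 2 : ℝ) • (F 1 * sderiv (G 0) + sderiv (F 0) * G 1 + F 3 * G 2 - F 2 * G 3) := by
  simp only [X, add_apply, sub_apply, smul_apply, dx_apply, mul_apply_one, eta1_apply_zero,
    eta1_apply_one, eta2_apply_zero, eta2_apply_one,
    evenPart_apply_zero, evenPart_apply_one, evenPart_apply_two, evenPart_apply_three,
    oddPart_apply_zero, oddPart_apply_one, oddPart_apply_two, oddPart_apply_three, sderiv_zero]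
  algebra

theorem X_apply_two :
    X F G 2 = F 0 * sderiv (G 2)
      + (1 / 2 : ℝ) • (F 2 * sderiv (G 0) + sderiv (F 0) * G 2 - F 3 * G 1 + F 1 * G 3) := by
  simp only [X, add_apply, sub_apply, smul_apply, dx_apply, mul_apply_two, eta1_apply_zero,
    eta1_apply_two, eta2_apply_zero, eta2_apply_two,
    evenPart_apply_zero, evenPart_apply_one, evenPart_apply_two, evenPart_apply_three,
    oddPart_apply_zero, oddPart_apply_one, oddPart_apply_two, oddPart_apply_three, sderiv_zero]
  algebra

theorem X_apply_three :
    X F G 3 = F 0 * sderiv (G 3) + sderiv (F 0) * G 3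
      + (1 / 2 : ℝ) • (F 1 * sderiv (G 2) - F 2 * sderiv (G 1) + sderiv (F 1) * G 2
        - sderiv (F 2) * G 1) := by
  simp only [X, add_apply, sub_apply, smul_apply, dx_apply, mul_apply_three, eta1_apply_zero,
    eta1_apply_one, eta1_apply_two, eta1_apply_three, eta2_apply_zero, eta2_apply_one,
    eta2_apply_two, eta2_apply_three,
    evenPart_apply_zero, evenPart_apply_one, evenPart_apply_two, evenPart_apply_three,
    oddPart_apply_zero, oddPart_apply_one, oddPart_apply_two, oddPart_apply_three, sderiv_zero]
  algebra

end S2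

set_option maxHeartbeats 400000 in
open S2 in
/-- The supercommutator of two contact vector fields on `ℝ^{1|2}` is the contact vector
field of the contact bracket: `X_F∘X_G − (−1)^{|F||G|} X_G∘X_F = X_{{F,G}}` for
homogeneous `F, G ∈ C^∞(ℝ^{1|2})`. -/
theorem contact_supercommutator (F G : S2) (pF pG : Bool)
    (hF : HasParity F pF) (hG : HasParity G pG) (K : S2) :
    X F (X G K) - sgn (pF && pG) • X G (X F K) = X (cbr F G) K := by
  cases pF <;> cases pG <;> obtain ⟨hF₁, hF₂⟩ := hF <;> obtain ⟨hG₁, hG₂⟩ := hG <;>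
    refine S2.ext ?_ ?_ ?_ ?_ <;>
    simp only [cbr, sgn_true, sgn_false, Bool.and_self, Bool.and_false, Bool.and_true, hF₁, hF₂,
      hG₁, hG₂, sub_apply, smul_apply, dx_apply, mul_apply_zero, mul_apply_one, mul_apply_two,
      mul_apply_three, X_apply_zero, X_apply_one, X_apply_two, X_apply_three, sderiv_zero,
      sderiv_add, sderiv_sub, sderiv_smul, sderiv_mul] <;>
    algebra
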